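/- arXiv:2604.03789 — 3 statements merged into one kernel-verified Lean document; each statement's English description precedes it below -/
import Mathlib

section
/- If a Noetherian local ring R is complete with respect to the M-adic topology, then R is quasi-complete: for every decreasing sequence {A_n} of ideals of R and each integer k ≥ 1, there exists s_k with A_{s_k} ⊆ (⋂_n A_n) + M^k. -/
/-!
Since `R ⧸ 𝔪 ^ j` is Artinian, the images of the `A n` in it stabilise, so some `A (s j)` lies in
`A n + 𝔪 ^ j` for every `n`. Starting from `x ∈ A (s k)`, repeatedly correct `x` inside
`A (s (k + 1)), A (s (k + 2)), …` by elements of `𝔪 ^ k, 𝔪 ^ (k + 1), …`; completeness provides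
a limit `L` with `x - L ∈ 𝔪 ^ k` and `L ∈ A n + 𝔪 ^ i` for all `n, i`. By Krull's intersection
theorem every ideal of `R` is `𝔪`-adically closed, so `L ∈ ⋂ A n`.
-/

/-- A local ring `R` is quasi-complete if for any antitone sequence of ideals
`A : ℕ → Ideal R` and each `k : ℕ`, there exists `s` such that
`A s ≤ (⨅ n, A n) ⊔ (IsLocalRing.maximalIdeal R) ^ k`. -/
def IsQuasiComplete (R : Type*) [CommRing R] [IsLocalRing R] : Prop :=
  ∀ A : ℕ → Ideal R, Antitone A → ∀ k : ℕ, ∃ s,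
    A s ≤ (⨅ n, A n) ⊔ (IsLocalRing.maximalIdeal R) ^ k

/-- A local ring `R` is weakly quasi-complete if the above holds for antitone
sequences with `⨅ n, A n = ⊥`. -/
def IsWeaklyQuasiComplete (R : Type*) [CommRing R] [IsLocalRing R] : Prop :=
  ∀ A : ℕ → Ideal R, Antitone A → (⨅ n, A n) = ⊥ → ∀ k : ℕ, ∃ s,
    A s ≤ (IsLocalRing.maximalIdeal R) ^ k

open IsLocalRing

theorem Ideal.iInf_sup_pow_eq_of_le_jacobson {R : Type*} [CommRing R] [IsNoetherianRing R]
    {I : Ideal R} (hI : I ≤ Ideal.jacobson ⊥) (J : Ideal R) : ⨅ i : ℕ, (J ⊔ I ^ i) = J := by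
  refine le_antisymm (fun x hx => ?_) (le_iInf fun _ => le_sup_left)
  rw [← Ideal.Quotient.eq_zero_iff_mem, ← Submodule.mem_bot R (M := R ⧸ J),
    ← Ideal.iInf_pow_smul_eq_bot_of_le_jacobson (M := R ⧸ J) I hI, Submodule.mem_iInf]
  intro i
  obtain ⟨y, hy, z, hz, rfl⟩ := Submodule.mem_sup.mp (Submodule.mem_iInf _ |>.mp hx i)
  rw [map_add, Ideal.Quotient.eq_zero_iff_mem.mpr hy, zero_add]
  have := Submodule.smul_mem_smul hz (Submodule.mem_top (x := (1 : R ⧸ J)))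
  rwa [Algebra.smul_def, mul_one, Ideal.Quotient.algebraMap_eq] at this

theorem IsLocalRing.isArtinianRing_quotient_maximalIdeal_pow (R : Type*) [CommRing R]
    [IsLocalRing R] [IsNoetherianRing R] (j : ℕ) : IsArtinianRing (R ⧸ maximalIdeal R ^ j) := by
  rcases Nat.eq_zero_or_pos j with rfl | hj
  · have : Subsingleton (R ⧸ maximalIdeal R ^ 0) := by
      rw [pow_zero, Ideal.one_eq_top]; infer_instance
    infer_instance
  · refine quotient_artinian_of_mem_minimalPrimes_of_isLocalRing _ ?_
    rw [← Ideal.radical_minimalPrimes, Ideal.radical_pow _ hj.ne',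
      (maximalIdeal.isMaximal R).isPrime.radical, Ideal.minimalPrimes_eq_subsingleton_self]
    rfl

theorem Ideal.exists_le_sup_of_antitone {R : Type*} [CommRing R] {I : Ideal R}
    [IsArtinianRing (R ⧸ I)] {A : ℕ → Ideal R} (hA : Antitone A) : ∃ s, ∀ n, A s ≤ A n ⊔ I := by
  obtain ⟨s, hs⟩ := IsArtinian.monotone_stabilizes
    ⟨fun n => OrderDual.toDual ((A n).map (Ideal.Quotient.mk I)),
      fun _ _ h => Ideal.map_mono (hA h)⟩
  refine ⟨s, fun n x hx => ?_⟩
  rcases le_total s n with hsn | hns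
  · rw [← Ideal.mem_quotient_iff_mem_sup]
    have hmap : (A s).map (Ideal.Quotient.mk I) = (A n).map (Ideal.Quotient.mk I) := hs n hsn
    exact hmap ▸ Ideal.mem_map_of_mem _ hx
  · exact Ideal.mem_sup_left (hA hns hx)

section Precomplete

variable {R M : Type*} [CommRing R] [AddCommGroup M] [Module R M] {I : Ideal R}

theorem IsPrecomplete.exists_smodEq_of_smodEq_succ [IsPrecomplete I M] {a : ℕ → M} {k : ℕ}
    (ha : ∀ n, a n ≡ a (n + 1) [SMOD (I ^ (k + n) • ⊤ : Submodule R M)]) :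
    ∃ L, ∀ n, a n ≡ L [SMOD (I ^ (k + n) • ⊤ : Submodule R M)] := by
  have hmono {m n : ℕ} (h : m ≤ n) : (I ^ n • ⊤ : Submodule R M) ≤ I ^ m • ⊤ :=
    Submodule.smul_mono_left (Ideal.pow_le_pow_right h)
  have hcauchy {m n : ℕ} (h : m ≤ n) : a m ≡ a n [SMOD (I ^ (k + m) • ⊤ : Submodule R M)] := by
    induction n, h using Nat.le_induction with
    | base => rfl
    | succ n hmn ih => exact ih.trans ((ha n).mono (hmono (by omega)))
  obtain ⟨L, hL⟩ := IsPrecomplete.prec ‹_› (f := fun n => a (n - k))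
    fun h => (hcauchy (Nat.sub_le_sub_right h k)).mono (hmono (by omega))
  exact ⟨L, fun n => by simpa using hL (k + n)⟩

theorem IsPrecomplete.exists_sub_mem_of_le_sup [IsPrecomplete I M] {B : ℕ → Submodule R M}
    (hB : ∀ j, B j ≤ B (j + 1) ⊔ I ^ j • ⊤) {k : ℕ} {x : M} (hx : x ∈ B k) :
    ∃ L, x - L ∈ (I ^ k • ⊤ : Submodule R M) ∧ ∀ j, k ≤ j → L ∈ B j ⊔ I ^ j • ⊤ := by
  have hstep (j : ℕ) (y : M) :
      ∃ z, y ∈ B j → z ∈ B (j + 1) ∧ y - z ∈ (I ^ j • ⊤ : Submodule R M) := by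
    by_cases hy : y ∈ B j
    · obtain ⟨z, hz, w, hw, rfl⟩ := Submodule.mem_sup.mp (hB j hy)
      exact ⟨z, fun _ => ⟨hz, by simpa using hw⟩⟩
    · exact ⟨y, fun h => absurd h hy⟩
  choose next hnext using hstep
  let a : ℕ → M := fun i => Nat.rec x (fun i => next (k + i)) i
  have ha_mem (i : ℕ) : a i ∈ B (k + i) := by
    induction i with
    | zero => exact hx
    | succ i ih => exact (hnext _ _ ih).1
  obtain ⟨L, hL⟩ := IsPrecomplete.exists_smodEq_of_smodEq_succ (I := I) (a := a) (k := k)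
    fun i => SModEq.sub_mem.mpr (hnext _ _ (ha_mem i)).2
  refine ⟨L, SModEq.sub_mem.mp (hL 0), fun j hj => ?_⟩
  obtain ⟨i, rfl⟩ := Nat.exists_eq_add_of_le hj
  have hdiff := SModEq.sub_mem.mp (hL i)
  simpa using
    Submodule.sub_mem _ (Submodule.mem_sup_left (ha_mem i)) (Submodule.mem_sup_right hdiff)

end Precomplete

/-- Chevalley: a complete Noetherian local ring is quasi-complete. -/
theorem complete_implies_quasiComplete
    (R : Type*) [CommRing R] [IsLocalRing R] [IsNoetherianRing R]
    [IsAdicComplete (IsLocalRing.maximalIdeal R) R] : IsQuasiComplete R := by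
  intro A hA k
  choose s hs using fun j =>
    have := isArtinianRing_quotient_maximalIdeal_pow R j
    Ideal.exists_le_sup_of_antitone (I := maximalIdeal R ^ j) hA
  refine ⟨s k, fun x hx => ?_⟩
  obtain ⟨L, hxL, hL⟩ := IsPrecomplete.exists_sub_mem_of_le_sup (B := fun j => A (s j))
    (fun j => by simpa only [smul_eq_mul, Ideal.mul_top] using hs j (s (j + 1))) hx
  simp only [smul_eq_mul, Ideal.mul_top] at hxL hL
  have hLA : L ∈ ⨅ n, A n := by
    refine Submodule.mem_iInf _ |>.mpr fun n => ?_
    rw [← Ideal.iInf_sup_pow_eq_of_le_jacobson (maximalIdeal_le_jacobson _) (A n)]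
    refine Submodule.mem_iInf _ |>.mpr fun i => ?_
    have hpow : maximalIdeal R ^ (k + i) ≤ maximalIdeal R ^ i := Ideal.pow_le_pow_right le_add_self
    exact sup_le ((hs _ n).trans (sup_le_sup_left hpow _)) (hpow.trans le_sup_right)
      (hL (k + i) le_self_add)
  simpa using Submodule.add_mem _ (Submodule.mem_sup_left hLA) (Submodule.mem_sup_right hxL)
end

section
/- A Noetherian local ring R is quasi-complete if and only if for every proper ideal I of R, the quotient R/I is weakly quasi-complete. -/
/-!
Ideals of `R ⧸ I` correspond to the ideals of `R` containing `I`; under this correspondence `⊥`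
goes to `I` and the `k`-th power of the maximal ideal of `R ⧸ I` goes to `I ⊔ 𝔪 ^ k`. So weak
quasi-completeness of `R ⧸ I` is the quasi-completeness condition on `R` for the antitone
sequences with intersection `I`, and a sequence with intersection `⊤` satisfies it trivially.
-/

open IsLocalRing Ideal

theorem comap_quotient_mk_bot {R : Type*} [CommRing R] (I : Ideal R) :
    (⊥ : Ideal (R ⧸ I)).comap (Ideal.Quotient.mk I) = I := by
  rw [← RingHom.ker_eq_comap_bot, mk_ker]

section

variable {R : Type*} [CommRing R] [IsLocalRing R]

theorem isLocalRing_quotient_of_ne_top {I : Ideal R} (hI : I ≠ ⊤) : IsLocalRing (R ⧸ I) :=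
  have := Ideal.Quotient.nontrivial_iff.mpr hI
  .of_surjective' _ Ideal.Quotient.mk_surjective

theorem comap_quotient_mk_maximalIdeal_pow (I : Ideal R) [IsLocalRing (R ⧸ I)] (k : ℕ) :
    (maximalIdeal (R ⧸ I) ^ k).comap (Ideal.Quotient.mk I) = I ⊔ maximalIdeal R ^ k := by
  rw [← map_maximalIdeal_of_surjective _ Ideal.Quotient.mk_surjective, ← Ideal.map_pow,
    comap_map_of_surjective _ Ideal.Quotient.mk_surjective, comap_quotient_mk_bot, sup_comm]

theorem isWeaklyQuasiComplete_quotient_iff (I : Ideal R) [IsLocalRing (R ⧸ I)] :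
    IsWeaklyQuasiComplete (R ⧸ I) ↔ ∀ A : ℕ → Ideal R, Antitone A → ⨅ n, A n = I →
      ∀ k : ℕ, ∃ s, A s ≤ I ⊔ maximalIdeal R ^ k := by
  have hmk : Function.Surjective (Ideal.Quotient.mk I) := Ideal.Quotient.mk_surjective
  constructor
  · intro h A hA hAI k
    have hcomap n : ((A n).map (Ideal.Quotient.mk I)).comap (Ideal.Quotient.mk I) = A n :=
      comap_map_mk (hAI ▸ iInf_le A n)
    have hbot : ⨅ n, (A n).map (Ideal.Quotient.mk I) = ⊥ := by
      apply comap_injective_of_surjective _ hmk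
      rw [comap_iInf, comap_quotient_mk_bot]
      simpa only [hcomap] using hAI
    obtain ⟨s, hs⟩ := h _ (fun m n hmn => map_mono (hA hmn)) hbot k
    refine ⟨s, ?_⟩
    rw [← hcomap s, ← comap_quotient_mk_maximalIdeal_pow]
    exact comap_mono hs
  · intro h B hB hB0 k
    have hI : ⨅ n, (B n).comap (Ideal.Quotient.mk I) = I := by
      rw [← comap_iInf, hB0, comap_quotient_mk_bot]
    obtain ⟨s, hs⟩ := h _ (fun m n hmn => comap_mono (hB hmn)) hI k
    rw [← comap_quotient_mk_maximalIdeal_pow, comap_le_comap_iff_of_surjective _ hmk] at hs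
    exact ⟨s, hs⟩

end

theorem isQuasiComplete_iff_quotients_weaklyQuasiComplete_general
    (R : Type*) [CommRing R] [IsLocalRing R] :
    IsQuasiComplete R ↔
      ∀ (I : Ideal R) (hI : I ≠ ⊤),
        haveI : Nontrivial (R ⧸ I) := Ideal.Quotient.nontrivial_iff.mpr hI
        haveI : IsLocalRing (R ⧸ I) :=
          IsLocalRing.of_surjective' (Ideal.Quotient.mk I) Ideal.Quotient.mk_surjective
        IsWeaklyQuasiComplete (R ⧸ I) := by
  refine ⟨fun h I hI => ?_, fun h A hA k => ?_⟩
  · have := isLocalRing_quotient_of_ne_top hI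
    refine (isWeaklyQuasiComplete_quotient_iff I).mpr fun A hA hAI k => ?_
    simpa only [hAI] using h A hA k
  · by_cases hJ : ⨅ n, A n = ⊤
    · exact ⟨0, by simp [hJ]⟩
    · have := isLocalRing_quotient_of_ne_top hJ
      exact (isWeaklyQuasiComplete_quotient_iff _).mp (h _ hJ) A hA rfl k

/-- A Noetherian local ring `R` is quasi-complete iff every proper quotient `R ⧸ I`
is weakly quasi-complete. -/
theorem isQuasiComplete_iff_quotients_weaklyQuasiComplete
    (R : Type*) [CommRing R] [IsLocalRing R] [IsNoetherianRing R] :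
    IsQuasiComplete R ↔
      ∀ (I : Ideal R) (hI : I ≠ ⊤),
        haveI : Nontrivial (R ⧸ I) := Ideal.Quotient.nontrivial_iff.mpr hI
        haveI : IsLocalRing (R ⧸ I) :=
          IsLocalRing.of_surjective' (Ideal.Quotient.mk I) Ideal.Quotient.mk_surjective
        IsWeaklyQuasiComplete (R ⧸ I) :=
  isQuasiComplete_iff_quotients_weaklyQuasiComplete_general R
end

section
/- A Noetherian local integral domain A is weakly quasi-complete if and only if P ∩ A ≠ (0) for every nonzero prime ideal P of the M-adic completion of A. -/
theorem exists_seq_of_forall_exists_succ {α : Type*} {p : ℕ → α → Prop}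
    {r : ℕ → α → α → Prop} {a : α} (ha : p 0 a)
    (h : ∀ i x, p i x → ∃ y, p (i + 1) y ∧ r i x y) :
    ∃ b : ℕ → α, b 0 = a ∧ ∀ i, p i (b i) ∧ r i (b i) (b (i + 1)) := by
  have : Nonempty α := ⟨a⟩
  choose! g hg using h
  let b : ℕ → α := fun i ↦ Nat.rec a (fun i x ↦ g i x) i
  have hb : ∀ i, p i (b i) := fun i ↦ Nat.rec ha (fun i ih ↦ (hg i _ ih).1) i
  exact ⟨b, rfl, fun i ↦ ⟨hb i, (hg i _ (hb i)).2⟩⟩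

namespace AdicCompletion

variable {R : Type*} [CommRing R] (I : Ideal R)

theorem evalₐ_comp_algebraMap (n : ℕ) :
    (evalₐ I n : AdicCompletion I R →+* R ⧸ I ^ n).comp (algebraMap R _) =
      Ideal.Quotient.mk (I ^ n) :=
  RingHom.ext fun r ↦ (evalₐ I n).commutes r

theorem ker_evalₐ_antitone : Antitone fun n ↦ RingHom.ker (evalₐ I n) := by
  intro m n hmn x hx
  obtain ⟨f, rfl⟩ := mk_surjective I R x
  simp only [RingHom.mem_ker, evalₐ_mk] at hx ⊢
  rw [← AdicCompletion.Ideal.mk_eq_mk I hmn, Ideal.Quotient.eq_zero_iff_mem]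
  exact Ideal.pow_le_pow_right hmn (Ideal.Quotient.eq_zero_iff_mem.mp hx)

theorem iInf_ker_evalₐ : ⨅ n, RingHom.ker (evalₐ I n) = ⊥ :=
  eq_bot_iff.mpr fun x hx ↦ ext_evalₐ fun n ↦ by
    simpa using (Submodule.mem_iInf _).mp hx n

theorem comap_ker_evalₐ (n : ℕ) :
    (RingHom.ker (evalₐ I n)).comap (algebraMap R (AdicCompletion I R)) = I ^ n := by
  ext r
  simp [Ideal.Quotient.eq_zero_iff_mem]

theorem exists_sub_algebraMap_mem_ker_evalₐ (x : AdicCompletion I R) (n : ℕ) :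
    ∃ r, x - algebraMap R _ r ∈ RingHom.ker (evalₐ I n) := by
  obtain ⟨r, hr⟩ := Ideal.Quotient.mk_surjective (evalₐ I n x)
  exact ⟨r, by simp [hr]⟩

theorem comap_map_sup_ker_evalₐ (J : Ideal R) (n : ℕ) :
    (J.map (algebraMap R (AdicCompletion I R)) ⊔ RingHom.ker (evalₐ I n)).comap
      (algebraMap R _) = J ⊔ I ^ n := by
  rw [← RingHom.ker_coe_toRingHom, ← Ideal.comap_map_of_surjective'
      (evalₐ I n : AdicCompletion I R →+* R ⧸ I ^ n) (surjective_evalₐ I n),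
    Ideal.map_map, Ideal.comap_comap, evalₐ_comp_algebraMap,
    Ideal.comap_map_of_surjective' _ Ideal.Quotient.mk_surjective, Ideal.mk_ker]

theorem exists_sub_mul_algebraMap_mem_ker_evalₐ {x y : AdicCompletion I R} {n : ℕ}
    (hy : y ∈ Ideal.span {x} ⊔ RingHom.ker (evalₐ I n)) :
    ∃ r, y - x * algebraMap R _ r ∈ RingHom.ker (evalₐ I n) := by
  obtain ⟨p, hp, κ, hκ, rfl⟩ := Submodule.mem_sup.mp hy
  obtain ⟨c, rfl⟩ := Ideal.mem_span_singleton'.mp hp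
  obtain ⟨r, hr⟩ := exists_sub_algebraMap_mem_ker_evalₐ I c n
  refine ⟨r, ?_⟩
  rw [show c * x + κ - x * algebraMap R _ r = x * (c - algebraMap R _ r) + κ by ring]
  exact Ideal.add_mem _ (Ideal.mul_mem_left _ _ hr) hκ

theorem exists_forall_sub_algebraMap_mem_ker_evalₐ (k : ℕ) (e : ℕ → R)
    (he : ∀ i, e i - e (i + 1) ∈ I ^ (k + i)) :
    ∃ x : AdicCompletion I R, ∀ i, x - algebraMap R _ (e i) ∈ RingHom.ker (evalₐ I (k + i)) := by
  let f : ℕ → R := fun j ↦ e (j - k)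
  have hf : ∀ j, f j ≡ f (j + 1) [SMOD (I ^ j • ⊤ : Submodule R R)] := by
    intro j
    rw [SModEq.sub_mem, smul_eq_mul, Ideal.mul_top]
    rcases le_or_gt k j with h | h
    · obtain ⟨i, rfl⟩ := Nat.exists_eq_add_of_le h
      simpa [f, Nat.add_sub_cancel_left, show k + i + 1 - k = i + 1 by omega] using he i
    · simp [f, Nat.sub_eq_zero_of_le h.le, Nat.sub_eq_zero_of_le h]
  refine ⟨mk I R (AdicCauchySequence.mk I R f hf), fun i ↦ ?_⟩
  rw [RingHom.mem_ker, map_sub, evalₐ_mk, AlgHom.commutes, Ideal.Quotient.algebraMap_eq,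
    sub_eq_zero]
  change Ideal.Quotient.mk _ (e (k + i - k)) = _
  rw [Nat.add_sub_cancel_left]

theorem exists_sub_algebraMap_mem_ker_evalₐ_of_le_sup (E : ℕ → Ideal R)
    (hE : ∀ j, E j ≤ E (j + 1) ⊔ I ^ j) {k : ℕ} {a : R} (ha : a ∈ E k) :
    ∃ x : AdicCompletion I R, x - algebraMap R _ a ∈ RingHom.ker (evalₐ I k) ∧
      ∀ i, ∃ c ∈ E (k + i), x - algebraMap R _ c ∈ RingHom.ker (evalₐ I (k + i)) := by
  have step : ∀ i c, c ∈ E (k + i) → ∃ c', c' ∈ E (k + (i + 1)) ∧ c - c' ∈ I ^ (k + i) := by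
    intro i c hc
    obtain ⟨c', hc', m, hm, rfl⟩ := Submodule.mem_sup.mp (hE _ hc)
    exact ⟨c', hc', by simpa using hm⟩
  obtain ⟨b, rfl, hb⟩ := exists_seq_of_forall_exists_succ
    (p := fun i c ↦ c ∈ E (k + i)) (r := fun i c c' ↦ c - c' ∈ I ^ (k + i)) ha step
  obtain ⟨x, hx⟩ := exists_forall_sub_algebraMap_mem_ker_evalₐ I k b fun i ↦ (hb i).2
  exact ⟨x, hx 0, fun i ↦ ⟨b i, (hb i).1, hx i⟩⟩

theorem iInf_comap_colon_ker_evalₐ_eq_bot {x : AdicCompletion I R}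
    (hx : ∀ r, algebraMap R _ r * x = 0 → r = 0) :
    ⨅ n, ((RingHom.ker (evalₐ I n)).colon {x}).comap (algebraMap R _) = ⊥ := by
  refine eq_bot_iff.mpr fun r hr ↦ hx r ?_
  have : algebraMap R _ r * x ∈ ⨅ n, RingHom.ker (evalₐ I n) := by
    simpa [Submodule.mem_iInf] using hr
  rwa [iInf_ker_evalₐ] at this

end AdicCompletion

theorem Ideal.exists_sup_eq_of_antitone {R : Type*} [CommRing R] {I : Ideal R}
    [IsArtinianRing (R ⧸ I)] {J : ℕ → Ideal R} (hJ : Antitone J) :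
    ∃ N, ∀ n ≥ N, J n ⊔ I = J N ⊔ I := by
  obtain ⟨N, hN⟩ := IsArtinian.monotone_stabilizes
    ⟨fun n ↦ OrderDual.toDual ((J n).map (Ideal.Quotient.mk I)), fun _ _ h ↦ Ideal.map_mono (hJ h)⟩
  refine ⟨N, fun n hn ↦ ?_⟩
  have h : (J N).map (Ideal.Quotient.mk I) = (J n).map (Ideal.Quotient.mk I) := hN n hn
  simpa only [Ideal.comap_map_of_surjective' _ Ideal.Quotient.mk_surjective, Ideal.mk_ker]
    using (congrArg (Ideal.comap (Ideal.Quotient.mk I)) h).symm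

theorem Ideal.exists_isPrime_ne_bot_comap_eq_bot {R S : Type*} [CommRing R] [IsDomain R]
    [CommRing S] (f : R →+* S) {J : Ideal S} (hJ0 : J ≠ ⊥) (hJ : J.comap f = ⊥) :
    ∃ P : Ideal S, P.IsPrime ∧ P ≠ ⊥ ∧ P.comap f = ⊥ := by
  have hdisj : Disjoint (J : Set S) ((nonZeroDivisors R).map f) := by
    rw [Set.disjoint_left]
    rintro _ hy ⟨a, ha, rfl⟩
    exact nonZeroDivisors.ne_zero ha (by simpa [hJ] using (Ideal.mem_comap.mpr hy : a ∈ J.comap f))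
  obtain ⟨P, hP, hJP, hPdisj⟩ := Ideal.exists_le_prime_disjoint J _ hdisj
  refine ⟨P, hP, ne_bot_of_le_ne_bot hJ0 hJP, eq_bot_iff.mpr fun a ha ↦ ?_⟩
  by_contra ha0
  exact Set.disjoint_left.mp hPdisj ha ⟨a, mem_nonZeroDivisors_of_ne_zero ha0, rfl⟩

namespace IsLocalRing

open AdicCompletion

variable {A : Type*} [CommRing A] [IsLocalRing A] [IsNoetherianRing A]

theorem isArtinianRing_quotient_maximalIdeal_pow_s3 :
    ∀ j : ℕ, IsArtinianRing (A ⧸ maximalIdeal A ^ j)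
  | 0 => by rw [pow_zero, Ideal.one_eq_top]; infer_instance
  | j + 1 => quotient_artinian_of_mem_minimalPrimes_of_isLocalRing _
      ⟨⟨inferInstance, Ideal.pow_le_self j.succ_ne_zero⟩, fun _ hq _ ↦ hq.1.le_of_pow_le hq.2⟩

theorem iInf_sup_maximalIdeal_pow (J : Ideal A) : ⨅ j, J ⊔ maximalIdeal A ^ j = J := by
  refine le_antisymm (fun a ha ↦ ?_) (le_iInf fun _ ↦ le_sup_left)
  rw [← Ideal.Quotient.eq_zero_iff_mem]
  refine IsHausdorff.haus (inferInstance : IsHausdorff (maximalIdeal A) (A ⧸ J)) _ fun j ↦ ?_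
  rw [SModEq.zero, Ideal.smul_top_eq_map, Submodule.restrictScalars_mem,
    Ideal.Quotient.algebraMap_eq, ← Ideal.mem_comap,
    Ideal.comap_map_of_surjective' _ Ideal.Quotient.mk_surjective, Ideal.mk_ker, sup_comm]
  exact (Submodule.mem_iInf _).mp ha j

theorem comap_iInf_map_sup_ker_evalₐ (J : Ideal A) :
    (⨅ j, J.map (algebraMap A (AdicCompletion (maximalIdeal A) A)) ⊔
      RingHom.ker (evalₐ (maximalIdeal A) j)).comap (algebraMap A _) = J := by
  simp only [Ideal.comap_iInf, comap_map_sup_ker_evalₐ, iInf_sup_maximalIdeal_pow]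

theorem exists_notMem_ker_evalₐ_forall_mem_map_sup {J : ℕ → Ideal A} (hJ : Antitone J) {k : ℕ}
    (hk : ∀ s, ¬J s ≤ maximalIdeal A ^ k) :
    ∃ x : AdicCompletion (maximalIdeal A) A, x ∉ RingHom.ker (evalₐ (maximalIdeal A) k) ∧
      ∀ n j, x ∈ (J n).map (algebraMap A _) ⊔ RingHom.ker (evalₐ (maximalIdeal A) j) := by
  have stable (j : ℕ) : ∃ N, ∀ n ≥ N, J n ⊔ maximalIdeal A ^ j = J N ⊔ maximalIdeal A ^ j :=
    have := isArtinianRing_quotient_maximalIdeal_pow_s3 (A := A) j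
    Ideal.exists_sup_eq_of_antitone hJ
  choose N hN using stable
  -- `E j` is the eventual value of `J n ⊔ Mʲ`.
  let E (j : ℕ) := J (N j) ⊔ maximalIdeal A ^ j
  have hE_le (j n : ℕ) : E j ≤ J n ⊔ maximalIdeal A ^ j :=
    (le_total n (N j)).elim (fun h ↦ sup_le_sup_right (hJ h) _) fun h ↦ (hN j n h).ge
  have hE_step (j : ℕ) : E j ≤ E (j + 1) ⊔ maximalIdeal A ^ j := by
    let n := max (N j) (N (j + 1))
    calc E j = J n ⊔ maximalIdeal A ^ j := (hN j n (le_max_left ..)).symm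
      _ ≤ (J n ⊔ maximalIdeal A ^ (j + 1)) ⊔ maximalIdeal A ^ j := sup_le_sup_right le_sup_left _
      _ = E (j + 1) ⊔ maximalIdeal A ^ j := by rw [hN (j + 1) n (le_max_right ..)]
  obtain ⟨a, ha, hak⟩ := SetLike.not_le_iff_exists.mp (hk (N k))
  obtain ⟨x, hxa, hx⟩ := exists_sub_algebraMap_mem_ker_evalₐ_of_le_sup _ E hE_step
    (Ideal.mem_sup_left ha : a ∈ E k)
  refine ⟨x, fun hxk ↦ hak ?_, fun n j ↦ ?_⟩
  · rw [← comap_ker_evalₐ (maximalIdeal A) k, Ideal.mem_comap,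
      ← sub_sub_cancel x (algebraMap A _ a)]
    exact sub_mem hxk hxa
  · obtain ⟨c, hc, hxc⟩ := hx j
    have hc' : algebraMap A _ c ∈ (J n).map (algebraMap A _) ⊔
        RingHom.ker (evalₐ (maximalIdeal A) (k + j)) := by
      rw [← Ideal.mem_comap, comap_map_sup_ker_evalₐ]
      exact hE_le _ n hc
    refine sup_le_sup_left (ker_evalₐ_antitone _ (Nat.le_add_left j k)) _ ?_
    rw [← add_sub_cancel (algebraMap A _ c) x]
    exact add_mem hc' (Ideal.mem_sup_right hxc)

end IsLocalRing

namespace IsWeaklyQuasiComplete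

open IsLocalRing AdicCompletion

variable {A : Type*} [CommRing A] [IsLocalRing A]

theorem exists_strictMono (h : IsWeaklyQuasiComplete A) {J : ℕ → Ideal A} (hJ : Antitone J)
    (hbot : ⨅ n, J n = ⊥) : ∃ s : ℕ → ℕ, StrictMono s ∧ ∀ k, J (s k) ≤ maximalIdeal A ^ k := by
  choose s hs using h J hJ hbot
  refine ⟨fun k ↦ (Finset.range (k + 1)).sup s + k, strictMono_nat_of_lt_succ fun k ↦ ?_,
    fun k ↦ (hJ ?_).trans (hs k)⟩
  · have : (Finset.range (k + 1)).sup s ≤ (Finset.range (k + 1 + 1)).sup s :=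
      Finset.sup_mono (Finset.range_subset_range.mpr (by omega))
    omega
  · exact le_add_right (Finset.le_sup (Finset.self_mem_range_succ k))

theorem eq_bot_of_iInf_comap_sup_ker_evalₐ_eq_bot (h : IsWeaklyQuasiComplete A)
    {J : Ideal (AdicCompletion (maximalIdeal A) A)}
    (hJ : ⨅ n, (J ⊔ RingHom.ker (evalₐ (maximalIdeal A) n)).comap (algebraMap A _) = ⊥) :
    J = ⊥ := by
  refine eq_bot_iff.mpr fun x hx ↦ ?_
  rw [← iInf_ker_evalₐ (maximalIdeal A), Submodule.mem_iInf]
  intro k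
  have hD : Antitone fun n ↦
      (J ⊔ RingHom.ker (evalₐ (maximalIdeal A) n)).comap (algebraMap A _) :=
    fun m n hmn ↦ Ideal.comap_mono (sup_le_sup_left (ker_evalₐ_antitone _ hmn) _)
  obtain ⟨s, hs⟩ := h _ hD hJ k
  obtain ⟨a, ha⟩ := exists_sub_algebraMap_mem_ker_evalₐ _ x (max s k)
  have haJ : a ∈ (J ⊔ RingHom.ker (evalₐ (maximalIdeal A) (max s k))).comap (algebraMap A _) := by
    rw [Ideal.mem_comap, ← sub_sub_cancel x (algebraMap A _ a)]
    exact sub_mem (Ideal.mem_sup_left hx) (Ideal.mem_sup_right ha)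
  have haM : algebraMap A _ a ∈ RingHom.ker (evalₐ (maximalIdeal A) k) := by
    rw [← Ideal.mem_comap, comap_ker_evalₐ]
    exact hs (hD (le_max_left s k) haJ)
  rw [← sub_add_cancel x (algebraMap A _ a)]
  exact add_mem (ker_evalₐ_antitone _ (le_max_right s k) ha) haM

theorem iInf_comap_span_sup_ker_evalₐ_le (h : IsWeaklyQuasiComplete A)
    {x : AdicCompletion (maximalIdeal A) A} (hx : ∀ a, algebraMap A _ a * x = 0 → a = 0) :
    ⨅ n, (Ideal.span {x} ⊔ RingHom.ker (evalₐ (maximalIdeal A) n)).comap (algebraMap A _) ≤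
      (Ideal.span {x}).comap (algebraMap A _) := by
  have hC : Antitone fun n ↦
      ((RingHom.ker (evalₐ (maximalIdeal A) n)).colon {x}).comap (algebraMap A _) :=
    fun m n hmn ↦ Ideal.comap_mono (Submodule.colon_mono (ker_evalₐ_antitone _ hmn) le_rfl)
  obtain ⟨t, ht, htC⟩ := h.exists_strictMono hC (iInf_comap_colon_ker_evalₐ_eq_bot _ hx)
  intro b hb
  choose d hd using fun n ↦
    exists_sub_mul_algebraMap_mem_ker_evalₐ _ ((Submodule.mem_iInf _).mp hb n)
  -- `d n` solves `b = x y` modulo `Kₙ`, so the differences of `d ∘ t` lie in the ideals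
  -- `{a | a x ∈ K_{t i}} ≤ Mⁱ`: weak quasi-completeness makes `d ∘ t` Cauchy.
  have hcauchy (i : ℕ) : d (t i) - d (t (i + 1)) ∈ maximalIdeal A ^ (0 + i) := by
    rw [zero_add]
    refine htC i (Submodule.mem_colon_singleton.mpr ?_)
    rw [smul_eq_mul, show algebraMap A _ (d (t i) - d (t (i + 1))) * x =
      (algebraMap A _ b - x * algebraMap A _ (d (t (i + 1)))) -
        (algebraMap A _ b - x * algebraMap A _ (d (t i))) by rw [map_sub]; ring]
    exact sub_mem (ker_evalₐ_antitone _ (ht.monotone i.le_succ) (hd _)) (hd _)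
  obtain ⟨w, hw⟩ := exists_forall_sub_algebraMap_mem_ker_evalₐ _ 0 (fun i ↦ d (t i)) hcauchy
  have hbw : algebraMap A _ b - x * w ∈ ⨅ n, RingHom.ker (evalₐ (maximalIdeal A) n) := by
    refine (Submodule.mem_iInf _).mpr fun n ↦ ?_
    rw [show algebraMap A _ b - x * w = (algebraMap A _ b - x * algebraMap A _ (d (t n))) -
      x * (w - algebraMap A _ (d (t n))) by ring]
    have hwn := hw n
    rw [zero_add] at hwn
    exact sub_mem (ker_evalₐ_antitone _ (ht.id_le n) (hd _)) (Ideal.mul_mem_left _ _ hwn)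
  rw [iInf_ker_evalₐ, Ideal.mem_bot, sub_eq_zero] at hbw
  exact Ideal.mem_comap.mpr (hbw ▸ Ideal.mul_mem_right _ _ (Ideal.mem_span_singleton_self x))

end IsWeaklyQuasiComplete

/-- Farley's criterion: a Noetherian local integral domain `A` is weakly quasi-complete
iff every nonzero prime ideal of the `M`-adic completion of `A` contracts to a nonzero
ideal of `A`. -/
theorem isWeaklyQuasiComplete_iff_primes_meet
    (A : Type*) [CommRing A] [IsDomain A] [IsLocalRing A] [IsNoetherianRing A] :
    IsWeaklyQuasiComplete A ↔
      ∀ P : Ideal (AdicCompletion (IsLocalRing.maximalIdeal A) A), P.IsPrime → P ≠ ⊥ →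
        P.comap (algebraMap A (AdicCompletion (IsLocalRing.maximalIdeal A) A)) ≠ ⊥ := by
  constructor
  · intro h P _ hP0 hP
    obtain ⟨x, hxP, hx0⟩ := Submodule.exists_mem_ne_zero_of_ne_bot hP0
    -- `Â` is flat over the Noetherian ring `A`, hence torsion-free.
    have hx (a : A) (hax : algebraMap A _ a * x = 0) : a = 0 := by
      rw [← Algebra.smul_def, smul_eq_zero] at hax
      exact hax.resolve_right hx0
    have hspan : Ideal.span {x} = ⊥ := h.eq_bot_of_iInf_comap_sup_ker_evalₐ_eq_bot <|
      le_bot_iff.mp <| (h.iInf_comap_span_sup_ker_evalₐ_le hx).trans <|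
        hP ▸ Ideal.comap_mono (Ideal.span_singleton_le_iff_mem _ |>.mpr hxP)
    exact hx0 (Ideal.span_singleton_eq_bot.mp hspan)
  · intro h J hJ hbot k
    by_contra! hk
    obtain ⟨x, hxk, hx⟩ := IsLocalRing.exists_notMem_ker_evalₐ_forall_mem_map_sup hJ hk
    let C := ⨅ n, ⨅ j, (J n).map (algebraMap A _) ⊔
      RingHom.ker (AdicCompletion.evalₐ (IsLocalRing.maximalIdeal A) j)
    have hC : C.comap (algebraMap A _) = ⊥ := by
      rw [Ideal.comap_iInf]
      simpa only [IsLocalRing.comap_iInf_map_sup_ker_evalₐ] using hbot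
    have hC0 : C ≠ ⊥ := (Submodule.ne_bot_iff C).mpr
      ⟨x, by simpa [C, Submodule.mem_iInf] using hx, fun hx0 ↦ hxk (hx0 ▸ zero_mem _)⟩
    obtain ⟨P, hP, hP0, hPA⟩ := Ideal.exists_isPrime_ne_bot_comap_eq_bot _ hC0 hC
    exact h P hP hP0 hPA
end
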